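/- arXiv:2002.10014 — 4 statements merged into one kernel-verified Lean document; each statement's English description precedes it below -/
import Mathlib

section
/- Let n ≥ 2 and let G be a balanced bipartite graph on 2n vertices with color classes R (red) and B (blue), each of size n. If every red vertex has degree greater than n/2 and every blue vertex has degree at least n/2, then G contains a Hamiltonian cycle. -/
/-!
Closure argument in the bipartite setting. Adding a missing red–blue edge `ab` preserves the
hypotheses, so by induction on the number of missing edges `G + ab` has a Hamiltonian cycle,
which either avoids `ab` or, after deleting `ab`, leaves a Hamiltonian path
`a = v₀, v₁, …, v₂ₙ₋₁ = b` of `G`. The blue neighbours of `a` are preceded on this path by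
`deg a` distinct red vertices, and `b` has `deg b` red neighbours; as `deg a + deg b > n`,
some red `x = vᵢ` is a neighbour of `b` with `y = vᵢ₊₁` a neighbour of `a`. Then
`a, …, x, b, …, y, a` is a Hamiltonian cycle of `G`.
-/

open Sum

namespace List

variable {α : Type*} {l : List α} {x y y' : α}

theorem exists_pair_infix_of_mem (hy : y ∈ l) (hne : l.head? ≠ some y) :
    ∃ x, [x, y] <:+: l := by
  induction l with
  | nil => simp at hy
  | cons z m ih =>
    rcases m with _ | ⟨w, m⟩
    · simp_all
    · by_cases hw : w = y
      · exact ⟨z, [], m, by simp [hw]⟩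
      · obtain ⟨x, hx⟩ :=
          ih (mem_of_ne_of_mem (Ne.symm (by simpa using hne)) hy) (by simpa using hw)
        exact ⟨x, hx.trans (infix_cons (infix_refl _))⟩

theorem Nodup.eq_of_pair_infix (hl : l.Nodup) (h : [x, y] <:+: l) (h' : [x, y'] <:+: l) :
    y = y' := by
  induction l with
  | nil => simp at h
  | cons z m ih =>
    rw [infix_cons_iff] at h h'
    rcases h with h | h <;> rcases h' with h' | h'
    · obtain ⟨t, rfl⟩ := (cons_prefix_cons.1 h).2
      obtain ⟨t', ht'⟩ := (cons_prefix_cons.1 h').2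
      simp_all
    · exact absurd (h'.subset (by simp [(cons_prefix_cons.1 h).1])) (nodup_cons.1 hl).1
    · exact absurd (h.subset (by simp [(cons_prefix_cons.1 h').1])) (nodup_cons.1 hl).1
    · exact ih hl.of_cons h h'

end List

namespace SimpleGraph

variable {V : Type*} {G H : SimpleGraph V} {u v a b x y : V} {l : List V}

/-- `l` is the vertex list of a Hamiltonian path of `G` from `u` to `v`. Hamiltonian cycles are
handled as such a list together with `G.Adj v u`, and turned into a closed walk only at the end. -/
structure IsHamiltonianList (G : SimpleGraph V) (u v : V) (l : List V) : Prop where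
  nodup : l.Nodup
  mem (w : V) : w ∈ l
  isChain : l.IsChain G.Adj
  head?_eq : l.head? = some u
  getLast?_eq : l.getLast? = some v

namespace IsHamiltonianList

theorem mono (h : G.IsHamiltonianList u v l) (hGH : G ≤ H) : H.IsHamiltonianList u v l :=
  { h with isChain := h.isChain.imp fun _ _ hxy ↦ hGH hxy }

theorem reverse (h : G.IsHamiltonianList u v l) : G.IsHamiltonianList v u l.reverse where
  nodup := List.nodup_reverse.2 h.nodup
  mem w := List.mem_reverse.2 (h.mem w)
  isChain := List.isChain_reverse.2 (h.isChain.imp fun _ _ hxy ↦ hxy.symm)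
  head?_eq := by rw [List.head?_reverse, h.getLast?_eq]
  getLast?_eq := by rw [List.getLast?_reverse, h.head?_eq]

theorem length_eq_card [Fintype V] (h : G.IsHamiltonianList u v l) :
    l.length = Fintype.card V := by
  classical
  simpa using Fintype.card_congr (h.nodup.getEquivOfForallMemList l h.mem)

theorem head_eq (h : G.IsHamiltonianList u v l) (hne : l ≠ []) : l.head hne = u :=
  Option.some_injective _ ((List.head?_eq_some_head hne).symm.trans h.head?_eq)

theorem getLast_eq (h : G.IsHamiltonianList u v l) (hne : l ≠ []) : l.getLast hne = v :=
  Option.some_injective _ ((List.getLast?_eq_some_getLast hne).symm.trans h.getLast?_eq)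

theorem of_sup_edge [Fintype V] (h : (G ⊔ edge u v).IsHamiltonianList u v l)
    (hV : 2 < Fintype.card V) : G.IsHamiltonianList u v l := by
  refine { h with isChain := List.isChain_iff_forall_rel_of_append_cons_cons.2 ?_ }
  intro x y s t hst
  rcases List.isChain_iff_forall_rel_of_append_cons_cons.1 h.isChain hst with hxy | hxy
  · exact hxy
  -- a consecutive pair `{u, v}` contains both ends of `l`, so it is all of `l`
  have hne : l ≠ [] := by rintro rfl; simpa using h.mem u
  have huv : u ∈ [x, y] ∧ v ∈ [x, y] := by
    rcases ((edge_adj _ _ _ _).1 hxy).1 with ⟨rfl, rfl⟩ | ⟨rfl, rfl⟩ <;> simp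
  have hl := h.nodup.eq_of_head_mem_of_getLast_mem_of_infix ⟨s, t, by simp [hst]⟩
    (h.head_eq hne ▸ huv.1) (h.getLast_eq hne ▸ huv.2)
  rw [← h.length_eq_card, ← hl] at hV
  simp at hV

theorem exists_of_sup_edge [Fintype V] (h : (G ⊔ edge a b).IsHamiltonianList u v l)
    (huv : (edge a b).Adj u v) (hV : 2 < Fintype.card V) : ∃ l, G.IsHamiltonianList a b l := by
  rcases ((edge_adj _ _ _ _).1 huv).1 with ⟨rfl, rfl⟩ | ⟨rfl, rfl⟩
  · exact ⟨l, h.of_sup_edge hV⟩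
  · rw [edge_comm] at h
    exact ⟨l.reverse, (h.of_sup_edge hV).reverse⟩

theorem rotate (h : G.IsHamiltonianList u v l) (hvu : G.Adj v u) (hxy : [x, y] <:+: l) :
    ∃ l', G.IsHamiltonianList y x l' := by
  obtain ⟨s, t, rfl⟩ := hxy
  rw [show s ++ [x, y] ++ t = s ++ [x] ++ y :: t by simp] at h
  obtain ⟨hs, ht, -⟩ := List.isChain_append.1 h.isChain
  refine ⟨y :: t ++ (s ++ [x]), List.perm_append_comm.nodup_iff.1 h.nodup,
    fun w ↦ List.perm_append_comm.mem_iff.1 (h.mem w), List.isChain_append.2 ⟨ht, hs, ?_⟩,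
    by simp, by rw [List.getLast?_append_of_ne_nil _ (by simp : s ++ [x] ≠ [])]; simp⟩
  rw [← List.getLast?_append_of_ne_nil (s ++ [x]) (List.cons_ne_nil y t), h.getLast?_eq,
    ← List.head?_append_of_ne_nil _ (by simp : s ++ [x] ≠ []), h.head?_eq]
  simpa using hvu

theorem cycle_or_path_of_sup_edge [Fintype V] (h : (G ⊔ edge a b).IsHamiltonianList u v l)
    (hvu : (G ⊔ edge a b).Adj v u) (hV : 2 < Fintype.card V) :
    (∃ u v l, G.IsHamiltonianList u v l ∧ G.Adj v u) ∨ ∃ l, G.IsHamiltonianList a b l := by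
  by_cases hG : G.Adj v u ∧ l.IsChain G.Adj
  · exact .inl ⟨u, v, l, { h with isChain := hG.2 }, hG.1⟩
  right
  rcases not_and_or.1 hG with hvu' | hl
  · exact h.exists_of_sup_edge (hvu.resolve_left hvu').symm hV
  obtain ⟨x, y, s, t, hst, hxy⟩ : ∃ x y s t, l = s ++ x :: y :: t ∧ ¬G.Adj x y := by
    by_contra! hno
    exact hl (List.isChain_iff_forall_rel_of_append_cons_cons.2 fun x y s t hst ↦ hno x y s t hst)
  obtain ⟨l', h'⟩ := h.rotate (x := x) (y := y) hvu ⟨s, t, by simp [hst]⟩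
  exact h'.exists_of_sup_edge
    ((List.isChain_iff_forall_rel_of_append_cons_cons.1 h.isChain hst).resolve_left hxy).symm hV

theorem exists_cycle_of_crossing (h : G.IsHamiltonianList a b l) (hxy : [x, y] <:+: l)
    (hay : G.Adj a y) (hbx : G.Adj b x) : ∃ u v l', G.IsHamiltonianList u v l' ∧ G.Adj v u := by
  obtain ⟨s, t, rfl⟩ := hxy
  rw [show s ++ [x, y] ++ t = s ++ [x] ++ y :: t by simp] at h
  obtain ⟨hs, ht, -⟩ := List.isChain_append.1 h.isChain
  have hperm : (s ++ [x] ++ (y :: t).reverse).Perm (s ++ [x] ++ y :: t) :=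
    (List.reverse_perm _).append_left _
  refine ⟨a, y, s ++ [x] ++ (y :: t).reverse, ⟨hperm.nodup_iff.2 h.nodup,
    fun w ↦ hperm.mem_iff.2 (h.mem w),
    List.isChain_append.2 ⟨hs, List.isChain_reverse.2 (ht.imp fun _ _ h ↦ h.symm), ?_⟩,
    ?_, ?_⟩, hay.symm⟩
  · rw [List.head?_reverse, ← List.getLast?_append_of_ne_nil (s ++ [x]) (List.cons_ne_nil y t),
      h.getLast?_eq]
    simpa using hbx.symm
  · have hsx : s ++ [x] ≠ [] := by simp
    exact (List.head?_append_of_ne_nil _ hsx).trans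
      ((List.head?_append_of_ne_nil _ hsx).symm.trans h.head?_eq)
  · rw [List.getLast?_append_of_ne_nil _ (by simp)]
    simp

theorem exists_isHamiltonianCycle [Fintype V] [DecidableEq V] (h : G.IsHamiltonianList u v l)
    (hvu : G.Adj v u) (hV : 2 < Fintype.card V) : ∃ c : G.Walk v v, c.IsHamiltonianCycle := by
  have hne : l ≠ [] := by rintro rfl; simpa using h.mem u
  let p : G.Walk u v := (Walk.ofSupport l hne h.isChain).copy (h.head_eq hne) (h.getLast_eq hne)
  have hp : p.support = l := by simp [p]
  have hpath : p.IsPath := Walk.IsPath.mk' (hp ▸ h.nodup)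
  refine ⟨.cons hvu p, Walk.isHamiltonianCycle_iff_isCycle_and_support_count_tail_eq_one.2
    ⟨(Walk.cons_isCycle_iff p hvu).2 ⟨hpath, fun he ↦ ?_⟩, fun w ↦ ?_⟩⟩
  · have := hpath.length_eq_one_of_mem_edges (Sym2.eq_swap ▸ he)
    have := p.length_support
    rw [hp, h.length_eq_card] at this
    omega
  · simpa [hp] using List.count_eq_one_of_mem h.nodup (h.mem w)

end IsHamiltonianList

section Bipartite

variable {α β : Type*}

theorem IsHamiltonianList.exists_crossing [Fintype α] {a : α} {b : β}
    {G : SimpleGraph (α ⊕ β)} {l : List (α ⊕ β)}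
    (hG : G ≤ completeBipartiteGraph α β) (h : G.IsHamiltonianList (inl a) (inr b) l)
    (hdeg : Fintype.card α < (G.neighborSet (inl a)).ncard + (G.neighborSet (inr b)).ncard) :
    ∃ x y, [x, y] <:+: l ∧ G.Adj (inl a) y ∧ G.Adj (inr b) x := by
  by_contra! hno
  set S := {x : α | G.Adj (inr b) (inl x)}
  have hpred : ∀ y ∈ G.neighborSet (inl a), ∃ x : α, [inl x, y] <:+: l ∧ x ∈ Sᶜ := by
    intro y hy
    obtain ⟨x, hx⟩ := List.exists_pair_infix_of_mem (h.mem y)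
      (by rw [h.head?_eq]; simpa using G.ne_of_adj hy)
    have hxy := List.isChain_pair.1 (h.isChain.infix hx)
    obtain ⟨x, rfl⟩ : ∃ x', x = inl x' := by
      have := hG hy
      have := hG hxy
      rcases x with x | x <;> rcases y with y | y <;> simp_all
    exact ⟨x, hx, hno _ _ hx hy⟩
  have : Nonempty α := ⟨a⟩
  -- `f y` is the predecessor of `y` on the path
  choose! f hf using hpred
  have ha : (G.neighborSet (inl a)).ncard ≤ Sᶜ.ncard :=
    Set.ncard_le_ncard_of_injOn f (fun y hy ↦ (hf y hy).2)
      fun y hy y' hy' hyy' ↦ h.nodup.eq_of_pair_infix (hf y hy).1 (hyy' ▸ (hf y' hy').1)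
  have hb : G.neighborSet (inr b) = inl '' S := by
    ext (x | x)
    · simp [S]
    · simpa using fun hx ↦ by simpa using hG hx
  rw [hb, Set.ncard_image_of_injective _ inl_injective] at hdeg
  have := Set.ncard_add_ncard_compl S
  rw [Nat.card_eq_fintype_card] at this
  omega

theorem isChain_flatMap_completeBipartiteGraph :
    ∀ m : List α, (m.flatMap fun x ↦ [inl x, inr x]).IsChain (completeBipartiteGraph α α).Adj
  | [] => .nil
  | [x] => by simp
  | x :: y :: m => by
    have := isChain_flatMap_completeBipartiteGraph (y :: m)
    simp only [List.flatMap_cons, List.cons_append, List.nil_append] at this ⊢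
    exact .cons_cons (by simp) (.cons_cons (by simp) this)

theorem isHamiltonianList_flatMap_completeBipartiteGraph {x₀ x₁ : α} {m : List α}
    (hm : m.Nodup) (hmem : ∀ x, x ∈ m) (h₀ : m.head? = some x₀)
    (h₁ : m.getLast? = some x₁) :
    (completeBipartiteGraph α α).IsHamiltonianList (inl x₀) (inr x₁)
      (m.flatMap fun x ↦ [inl x, inr x]) where
  nodup := List.nodup_flatMap.2
    ⟨fun x _ ↦ by simp, hm.imp fun hxy ↦ by simp [Function.onFun, Ne.symm hxy]⟩
  mem := by rintro (x | x) <;> simpa using hmem x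
  isChain := isChain_flatMap_completeBipartiteGraph m
  head?_eq := by cases m <;> simp_all
  getLast?_eq := by
    rw [← List.head?_reverse, List.reverse_flatMap]
    rw [← List.head?_reverse] at h₁
    cases h : m.reverse <;> simp_all

theorem exists_isHamiltonianList_completeBipartiteGraph [Fintype α] [Nonempty α] :
    ∃ u v l, (completeBipartiteGraph α α).IsHamiltonianList u v l ∧
      (completeBipartiteGraph α α).Adj v u := by
  have hm : (Finset.univ : Finset α).toList ≠ [] := by
    simpa using Finset.univ_nonempty.ne_empty
  exact ⟨_, _, _, isHamiltonianList_flatMap_completeBipartiteGraph (Finset.nodup_toList _)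
    (by simp) (List.head?_eq_some_head hm) (List.getLast?_eq_some_getLast hm), by simp⟩

theorem exists_isHamiltonianList_of_bipartite_ore [Fintype α] (hα : 2 ≤ Fintype.card α)
    {G : SimpleGraph (α ⊕ α)} (hG : G ≤ completeBipartiteGraph α α)
    (hdeg : ∀ a b, ¬G.Adj (inl a) (inr b) →
      Fintype.card α < (G.neighborSet (inl a)).ncard + (G.neighborSet (inr b)).ncard) :
    ∃ u v l, G.IsHamiltonianList u v l ∧ G.Adj v u := by
  by_cases hK : ∀ a b, G.Adj (inl a) (inr b)
  · have : Nonempty α := Fintype.card_pos_iff.1 (by omega)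
    have hKG : completeBipartiteGraph α α ≤ G := by
      rintro (a | a) (b | b) hab
      exacts [by simp at hab, hK a b, (hK b a).symm, by simp at hab]
    obtain ⟨u, v, l, hl, hvu⟩ := exists_isHamiltonianList_completeBipartiteGraph (α := α)
    exact ⟨u, v, l, hl.mono hKG, hKG hvu⟩
  obtain ⟨a, b, hab⟩ : ∃ a b, ¬G.Adj (inl a) (inr b) := by simpa using hK
  have hGG' : G ≤ G ⊔ edge (inl a) (inr b) := le_sup_left
  obtain ⟨u, v, l, hl, hvu⟩ := exists_isHamiltonianList_of_bipartite_ore hα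
    (sup_le hG ((edge_le_iff _).2 (.inr (by simp)))) fun a' b' hab' ↦
      (hdeg a' b' fun h ↦ hab' (hGG' h)).trans_le (add_le_add
        (Set.ncard_le_ncard fun _ h ↦ hGG' h) (Set.ncard_le_ncard fun _ h ↦ hGG' h))
  rcases hl.cycle_or_path_of_sup_edge hvu (by rw [Fintype.card_sum]; omega) with
    hcyc | ⟨l', hl'⟩
  · exact hcyc
  obtain ⟨x, y, hxy, hay, hbx⟩ := hl'.exists_crossing hG (hdeg a b hab)
  exact hl'.exists_cycle_of_crossing hxy hay hbx
termination_by {p : α × α | ¬G.Adj (inl p.1) (inr p.2)}.ncard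
decreasing_by
  refine Set.ncard_lt_ncard ((Set.ssubset_iff_of_subset ?_).2 ⟨(a, b), hab, by simp [edge_adj]⟩)
  exact fun p hp h ↦ hp (hGG' h)

end Bipartite

end SimpleGraph

/-- Moon–Moser theorem: a balanced bipartite graph on `2n` vertices (`n ≥ 2`),
with red class `Sum.inl` and blue class `Sum.inr`, in which every red vertex has
degree `> n/2` and every blue vertex has degree `≥ n/2`, has a Hamiltonian cycle. -/
theorem stmt_0 (n : ℕ) (hn : 2 ≤ n) (G : SimpleGraph (Fin n ⊕ Fin n))
    (hbipL : ∀ a b : Fin n, ¬ G.Adj (Sum.inl a) (Sum.inl b))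
    (hbipR : ∀ a b : Fin n, ¬ G.Adj (Sum.inr a) (Sum.inr b))
    (hred : ∀ a : Fin n, n < 2 * (G.neighborSet (Sum.inl a)).ncard)
    (hblue : ∀ b : Fin n, n ≤ 2 * (G.neighborSet (Sum.inr b)).ncard) :
    ∃ (v : Fin n ⊕ Fin n) (c : G.Walk v v), c.IsHamiltonianCycle := by
  have hG : G ≤ completeBipartiteGraph (Fin n) (Fin n) := by
    rintro (a | a) (b | b) hab
    exacts [(hbipL a b hab).elim, by simp, by simp, (hbipR a b hab).elim]
  obtain ⟨u, v, l, hl, hvu⟩ :=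
    SimpleGraph.exists_isHamiltonianList_of_bipartite_ore (by simpa using hn) hG
      fun a b _ ↦ by have := hred a; have := hblue b; simp only [Fintype.card_fin]; omega
  exact ⟨v, hl.exists_isHamiltonianCycle hvu (by simp; omega)⟩
end

section
/- Let n ≥ 2, let k ≤ n/2, and let A ⊆ Z_{2n} be a set of k odd elements. Let B = (A + 1) ∪ (A − 1). If |B| = |A| + 1, then A is an arithmetic progression of common difference 2, i.e., A = {a, a+2, a+4, ..., a+2(k−1)} for some a ∈ Z_{2n}. -/
/-!
Translating `(A + 1) ∪ (A - 1)` by `1` gives `A ∪ (A + 2)`, so `A` has exactly one element `c`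
with `c - 2 ∉ A`. Since `|A| < n`, the order of `2` in `ℤ/2n`, the walk `s, s - 2, s - 4, …`
from any `s ∈ A` leaves `A`, and its last point inside `A` must be `c`. Hence `A` is the single
run `c, c + 2, …` of length `|A|`.
-/

open Finset

section ArithmeticProgression

variable {G : Type*} [AddCommGroup G] [DecidableEq G]

theorem Finset.exists_add_nsmul_notMem {A : Finset G} {g : G} (hg : A.card < addOrderOf g)
    (s : G) : ∃ i < addOrderOf g, s + i • g ∉ A := by
  by_contra! h
  obtain ⟨i, hi, j, hj, hne, heq⟩ := exists_ne_map_eq_of_card_lt_of_maps_to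
    (s := range (addOrderOf g)) (by simpa) (f := fun i => s + i • g)
    (fun i hi => h i (by simpa using hi))
  exact hne (nsmul_injOn_Iio_addOrderOf (by simpa using hi) (by simpa using hj)
    (add_left_cancel heq))

theorem Finset.exists_maximal_add_nsmul_run {A : Finset G} {g : G}
    (hg : A.card < addOrderOf g) {s : G} (hs : s ∈ A) :
    ∃ m, m + 1 < addOrderOf g ∧ (∀ i ≤ m, s + i • g ∈ A) ∧ s + (m + 1) • g ∉ A := by
  have hex := exists_add_nsmul_notMem hg s
  obtain ⟨hlt, hout⟩ := Nat.find_spec hex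
  have hpos : Nat.find hex ≠ 0 := by
    intro h
    rw [h, zero_nsmul, add_zero] at hout
    exact hout hs
  refine ⟨Nat.find hex - 1, by omega, fun i hi => ?_, by rwa [Nat.sub_add_cancel (by omega)]⟩
  by_contra hiA
  exact Nat.find_min hex (by omega) ⟨by omega, hiA⟩

theorem Finset.card_image_add_union_image_sub (A : Finset G) (g : G) :
    (A.image (· + g) ∪ A.image (· - g)).card = (A ∪ A.image (· + (g + g))).card := by
  rw [← card_image_of_injective _ (add_left_injective g), image_union, image_image, image_image,
    union_comm]
  congr 2 <;> ext <;> simp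

theorem Finset.exists_unique_sub_notMem {A : Finset G} {g : G}
    (h : (A ∪ A.image (· + g)).card = A.card + 1) :
    ∃ c ∈ A, ∀ s ∈ A, s - g ∉ A ↔ s = c := by
  obtain ⟨c, hc⟩ : ∃ c, A \ A.image (· + g) = {c} := by
    apply card_eq_one.mp
    have := card_sdiff_add_card A (A.image (· + g))
    rw [card_image_of_injective _ (add_left_injective g)] at this
    omega
  have hmem_image : ∀ s, s ∈ A.image (· + g) ↔ s - g ∈ A := fun s => by
    simp [sub_eq_add_neg]
  refine ⟨c, (mem_sdiff.mp (hc ▸ mem_singleton_self c)).1, fun s hs => ?_⟩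
  rw [← mem_singleton, ← hc, mem_sdiff, hmem_image]
  exact (and_iff_right hs).symm

theorem Finset.exists_eq_add_nsmul_of_sub_notMem {A : Finset G} {g : G}
    (hg : A.card < addOrderOf g) {c : G} (hstart : ∀ s ∈ A, s - g ∉ A → s = c)
    {s : G} (hs : s ∈ A) : ∃ j : ℕ, s = c + j • g ∧ ∀ i ≤ j, c + i • g ∈ A := by
  obtain ⟨j, -, hback, hback_end⟩ :=
    exists_maximal_add_nsmul_run (g := -g) (by rwa [addOrderOf_neg]) hs
  rw [succ_nsmul, ← add_assoc, ← sub_eq_add_neg] at hback_end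
  have hsj : s = c + j • g := by
    rw [← hstart _ (hback j le_rfl) hback_end, smul_neg, neg_add_cancel_right]
  refine ⟨j, hsj, fun i hi => ?_⟩
  obtain ⟨d, rfl⟩ := Nat.exists_eq_add_of_le hi
  convert hback d (Nat.le_add_left d i) using 1
  rw [hsj, add_nsmul, smul_neg, ← add_assoc, add_neg_cancel_right]

theorem Finset.exists_eq_image_range_of_card_union_image_add {A : Finset G} {g : G}
    (hg : A.card < addOrderOf g) (h : (A ∪ A.image (· + g)).card = A.card + 1) :
    ∃ c, A = (range A.card).image (fun i => c + i • g) := by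
  obtain ⟨c, hc_mem, hstart⟩ := exists_unique_sub_notMem h
  obtain ⟨m, hm, hrun, hend⟩ := exists_maximal_add_nsmul_run hg hc_mem
  have hsub : A ⊆ (range (m + 1)).image (fun i => c + i • g) := by
    intro s hs
    obtain ⟨j, rfl, hj⟩ :=
      exists_eq_add_nsmul_of_sub_notMem hg (fun s hs => (hstart s hs).mp) hs
    have hjm : j < m + 1 := by
      by_contra! hmj
      exact hend (hj _ hmj)
    exact mem_image.mpr ⟨j, mem_range.mpr hjm, rfl⟩
  have hsup : (range (m + 1)).image (fun i => c + i • g) ⊆ A := by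
    intro s hs
    obtain ⟨i, hi, rfl⟩ := mem_image.mp hs
    exact hrun i (Nat.lt_succ_iff.mp (mem_range.mp hi))
  have hcard : ((range (m + 1)).image (fun i => c + i • g)).card = m + 1 := by
    rw [card_image_of_injOn, card_range]
    intro i hi j hj hij
    simp only [coe_range, Set.mem_Iio] at hi hj
    exact nsmul_injOn_Iio_addOrderOf (Set.mem_Iio.mpr (by omega)) (Set.mem_Iio.mpr (by omega))
      (add_left_cancel hij)
  have hA := subset_antisymm hsub hsup
  refine ⟨c, ?_⟩
  rw [show A.card = m + 1 by rw [← hcard, ← hA]]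
  exact hA

end ArithmeticProgression

theorem ZMod.addOrderOf_two_of_two_mul {n : ℕ} (hn : n ≠ 0) :
    addOrderOf (2 : ZMod (2 * n)) = n := by
  rw [← Nat.cast_two (R := ZMod (2 * n)), ZMod.addOrderOf_coe _ (by omega),
    Nat.gcd_mul_right_left, Nat.mul_div_cancel_left _ two_pos]

theorem stmt_4_general (n : ℕ) (k : ℕ) (hk : 2 * k ≤ n)
    (A : Finset (ZMod (2 * n))) (hA : A.card = k)
    (hcard : (A.image (· + (1 : ZMod (2 * n))) ∪ A.image (· - (1 : ZMod (2 * n)))).card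
      = A.card + 1) :
    ∃ a : ZMod (2 * n), A = (Finset.range k).image (fun i : ℕ => a + 2 * (i : ZMod (2 * n))) := by
  have hk0 : k ≠ 0 := by
    rintro rfl
    simp [card_eq_zero.mp hA] at hcard
  rw [card_image_add_union_image_sub, one_add_one_eq_two] at hcard
  obtain ⟨a, ha⟩ := exists_eq_image_range_of_card_union_image_add
    (by rw [ZMod.addOrderOf_two_of_two_mul (by omega)]; omega) hcard
  refine ⟨a, ha.trans ?_⟩
  simp [hA, nsmul_eq_mul, mul_comm]

/-- Lemma 3.2 (second part): if `n ≥ 2`, `A ⊆ ℤ/2n` is a set of `k ≤ n/2` odd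
elements and `|(A + 1) ∪ (A - 1)| = |A| + 1`, then `A` is an arithmetic
progression `{a, a+2, …, a+2(k-1)}` of common difference `2`. -/
theorem stmt_4 (n : ℕ) (hn : 2 ≤ n) (k : ℕ) (hk : 2 * k ≤ n)
    (A : Finset (ZMod (2 * n))) (hA : A.card = k)
    (hodd : ∀ a ∈ A, a.val % 2 = 1)
    (hcard : (A.image (· + (1 : ZMod (2 * n))) ∪ A.image (· - (1 : ZMod (2 * n)))).card
      = A.card + 1) :
    ∃ a : ZMod (2 * n), A = (Finset.range k).image (fun i : ℕ => a + 2 * (i : ZMod (2 * n))) :=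
  stmt_4_general n k hk A hA hcard
end

section
/- For every even n ≥ 2 there exists a family G_1, ..., G_n of bipartite graphs on a common vertex set X of n red and n blue vertices, with red and blue classes independent in each G_i and minimum degree exactly n/2 in each G_i, such that no perfect matching M on X admits a bijection φ from the edges of M to {1, ..., n} with each edge e ∈ E(G_{φ(e)}). -/
/-!
Split the red and the blue vertices into lower and upper halves; all graphs but the last join
equal halves and the last one joins opposite halves, so every degree is `n / 2`. A perfect
matching transversal takes from graph `i` an edge between red `r i` and blue `b i`, where `r` and
`b` are bijections. Hence `r` and `b` hit the lower half equally often, yet they hit the same half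
at every index except the last.
-/

open Function

variable {ι α β : Type*}

theorem Function.Bijective.iff_of_forall_ne [Fintype ι] [Fintype α] {r b : ι → α}
    (hr : r.Bijective) (hb : b.Bijective) (p : α → Prop) [DecidablePred p] {j : ι}
    (h : ∀ i ≠ j, (p (r i) ↔ p (b i))) : p (r j) ↔ p (b j) := by
  let f : α → ℤ := fun x => if p x then 1 else 0
  have hsum : ∑ i, (f (r i) - f (b i)) = 0 := by
    rw [Finset.sum_sub_distrib, hr.sum_comp f, hb.sum_comp f, sub_self]
  rw [Finset.sum_eq_single j (fun i _ hi => by simp [f, h i hi]) (by simp)] at hsum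
  by_cases hrj : p (r j) <;> by_cases hbj : p (b j) <;> simp_all [f]

theorem Function.bijective_left_and_right_of_existsUnique_mem_sym2 {f : ι → α} {g : ι → β}
    (h : ∀ v : α ⊕ β, ∃! i, v ∈ s(Sum.inl (f i), Sum.inr (g i))) : f.Bijective ∧ g.Bijective := by
  simp only [bijective_iff_existsUnique]
  refine ⟨fun a => ?_, fun b => ?_⟩
  · simpa [eq_comm] using h (Sum.inl a)
  · simpa [eq_comm] using h (Sum.inr b)

namespace SimpleGraph

def bipartiteOfRel (r : α → β → Prop) : SimpleGraph (α ⊕ β) where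
  Adj
    | .inl a, .inr b => r a b
    | .inr b, .inl a => r a b
    | _, _ => False
  symm := ⟨by rintro (_ | _) (_ | _) h <;> exact h⟩
  loopless := ⟨by rintro (_ | _) h <;> exact h⟩

variable {r : α → β → Prop}

@[simp]
theorem bipartiteOfRel_adj_inl_inr {a : α} {b : β} :
    (bipartiteOfRel r).Adj (.inl a) (.inr b) ↔ r a b := Iff.rfl

@[simp]
theorem bipartiteOfRel_adj_inr_inl {a : α} {b : β} :
    (bipartiteOfRel r).Adj (.inr b) (.inl a) ↔ r a b := Iff.rfl

theorem bipartiteOfRel_not_adj_inl_inl (a a' : α) : ¬ (bipartiteOfRel r).Adj (.inl a) (.inl a') :=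
  id

theorem bipartiteOfRel_not_adj_inr_inr (b b' : β) : ¬ (bipartiteOfRel r).Adj (.inr b) (.inr b') :=
  id

theorem ncard_neighborSet_bipartiteOfRel_inl (a : α) :
    ((bipartiteOfRel r).neighborSet (.inl a)).ncard = {b | r a b}.ncard := by
  have : (bipartiteOfRel r).neighborSet (.inl a) = Sum.inr '' {b | r a b} := by
    ext (a' | b) <;> simp [bipartiteOfRel_not_adj_inl_inl]
  rw [this, Set.ncard_image_of_injective _ Sum.inr_injective]

theorem ncard_neighborSet_bipartiteOfRel_inr (b : β) :
    ((bipartiteOfRel r).neighborSet (.inr b)).ncard = {a | r a b}.ncard := by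
  have : (bipartiteOfRel r).neighborSet (.inr b) = Sum.inl '' {a | r a b} := by
    ext (a | b') <;> simp [bipartiteOfRel_not_adj_inr_inr]
  rw [this, Set.ncard_image_of_injective _ Sum.inl_injective]

theorem exists_eq_of_mem_edgeSet_bipartiteOfRel {e : Sym2 (α ⊕ β)}
    (he : e ∈ (bipartiteOfRel r).edgeSet) : ∃ a b, r a b ∧ e = s(.inl a, .inr b) := by
  induction e using Sym2.ind with
  | _ u v =>
    rcases u with a | b <;> rcases v with a' | b'
    · exact (bipartiteOfRel_not_adj_inl_inl (r := r) a a' he).elim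
    · exact ⟨a, b', he, rfl⟩
    · exact ⟨a', b, he, Sym2.eq_swap⟩
    · exact (bipartiteOfRel_not_adj_inr_inr (r := r) b b' he).elim

end SimpleGraph

theorem Fin.two_mul_ncard_setOf_lt_half_iff {n : ℕ} (hn : Even n) (q : Prop) :
    2 * {c : Fin n | ((c : ℕ) < n / 2 ↔ q)}.ncard = n := by
  have hS : {c : Fin n | (c : ℕ) < n / 2}.ncard = n / 2 := by
    rw [← Fin.range_castLE (Nat.div_le_self n 2), Set.ncard_range_of_injective (castLE_injective _),
      Nat.card_eq_fintype_card, Fintype.card_fin]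
  have hSc := Set.ncard_add_ncard_compl {c : Fin n | (c : ℕ) < n / 2}
  rw [Nat.card_eq_fintype_card, Fintype.card_fin, Set.compl_ofPred] at hSc
  have hhalf := Nat.two_mul_div_two_of_even hn
  by_cases hq : q <;> simp only [hq, iff_true, iff_false] <;> omega

open SimpleGraph in
/-- Sharpness of Theorem 1.5: for every even `n ≥ 2` there is a family of `n`
bipartite graphs on `n` red and `n` blue common vertices, with red/blue classes
independent and every vertex of degree exactly `n/2` in each graph, admitting no
perfect matching transversal. -/
theorem stmt_9 (n : ℕ) (hn : 2 ≤ n) (hne : Even n) :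
    ∃ G : Fin n → SimpleGraph (Fin n ⊕ Fin n),
      (∀ i, ∀ a b : Fin n, ¬ (G i).Adj (Sum.inl a) (Sum.inl b)) ∧
      (∀ i, ∀ a b : Fin n, ¬ (G i).Adj (Sum.inr a) (Sum.inr b)) ∧
      (∀ i, ∀ v : Fin n ⊕ Fin n, 2 * ((G i).neighborSet v).ncard = n) ∧
      ¬ ∃ M : Fin n → Sym2 (Fin n ⊕ Fin n),
          (∀ i, M i ∈ (G i).edgeSet) ∧ (∀ v : Fin n ⊕ Fin n, ∃! i, v ∈ M i) := by
  let last : Fin n := ⟨n - 1, by omega⟩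
  let lower : Fin n → Prop := fun x => (x : ℕ) < n / 2
  refine ⟨fun i => bipartiteOfRel fun a c => ((lower a ↔ lower c) ↔ i ≠ last),
    fun _ => bipartiteOfRel_not_adj_inl_inl, fun _ => bipartiteOfRel_not_adj_inr_inr, ?_, ?_⟩
  · rintro i (a | c)
    · rw [ncard_neighborSet_bipartiteOfRel_inl]
      convert Fin.two_mul_ncard_setOf_lt_half_iff hne (lower a ↔ i ≠ last) using 3
      ext; simp only [Set.mem_ofPred_eq, lower]; tauto
    · rw [ncard_neighborSet_bipartiteOfRel_inr]
      convert Fin.two_mul_ncard_setOf_lt_half_iff hne (lower c ↔ i ≠ last) using 3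
      ext; simp only [Set.mem_ofPred_eq, lower]; tauto
  · rintro ⟨M, hM, huniq⟩
    choose r b hrb hM using fun i => exists_eq_of_mem_edgeSet_bipartiteOfRel (hM i)
    simp only [hM] at huniq
    obtain ⟨hr, hb⟩ := bijective_left_and_right_of_existsUnique_mem_sym2 huniq
    have hlast : ¬ (lower (r last) ↔ lower (b last)) := by simpa using hrb last
    exact hlast (hr.iff_of_forall_ne hb lower fun i hi => (hrb i).2 hi)
end

section
/- Let n ≥ 4, let X be a set of n red and n blue vertices, and let G_1, ..., G_{2n} be bipartite graphs on X with red and blue classes independent, red degrees > n/2, and blue degrees ≥ n/2 in each G_i. Suppose C is a partial transversal isomorphic to a cycle of length 2n − 2 with injection φ missing exactly the indices 2n−1 and 2n, and suppose the family contains no partial transversal isomorphic to a cycle of some fixed even length ℓ with 4 ≤ ℓ ≤ 2n − 4. Then every edge v_j v_{j+1} of C belongs to E(G_{2n−1}) or E(G_{2n}). -/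
/-!
Rotate `C` so that the edge in question is `v₀v₁`, and suppose it lies in neither of the unused
graphs `A = G_{2n-1}`, `B = G_{2n}`. Since `C` alternates between red and blue, it has `n - 1`
vertices of each colour, so all but at most one `A`-neighbour of `v₀` is a `v_s` with `s` odd, and
all but at most one `B`-neighbour of `v₁` is a `v_u` with `u` even; by the degree conditions there
are at least `n - 1` such chords. Odd positions `s` are matched injectively with nonzero even
positions `u(s)`, of which there are only `n - 2`, in such a way that the chords `v₀v_s`,
`v₁v_{u(s)}` and two arcs of `C` form a cycle of length `ℓ`. By pigeonhole both chords of some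
matched pair exist, and giving them the colours `A` and `B` yields a transversal `ℓ`-cycle.
-/

open Function Finset SimpleGraph

variable {V : Type*}

section Transversal

variable {ι : Type*}

def IsPartialTransversal (G : ι → SimpleGraph V) (p : Sym2 V → Prop) : Prop :=
  ∃ ψ : {e // p e} → ι, Injective ψ ∧ ∀ e, e.1 ∈ (G (ψ e)).edgeSet

theorem isPartialTransversal_extend_two {G : ι → SimpleGraph V} {p q : Sym2 V → Prop}
    {φ : {e // p e} → ι} (hφ : Injective φ) (hφG : ∀ e, e.1 ∈ (G (φ e)).edgeSet) {a b : ι}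
    (hab : a ≠ b) (ha : ∀ e, φ e ≠ a) (hb : ∀ e, φ e ≠ b) {x y : Sym2 V}
    (hx : x ∈ (G a).edgeSet) (hy : y ∈ (G b).edgeSet) (hq : ∀ e, q e → p e ∨ e = x ∨ e = y) :
    IsPartialTransversal G q := by
  classical
  refine ⟨fun e => if h : p e.1 then φ ⟨e.1, h⟩ else if e.1 = x then a else b, ?_, ?_⟩
  · rintro ⟨e, he⟩ ⟨f, hf⟩ hef
    apply Subtype.ext
    dsimp only at hef ⊢
    have he' := hq e he
    have hf' := hq f hf
    split_ifs at hef
    · exact congrArg Subtype.val (hφ hef)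
    all_goals first
      | exact absurd hef (ha _) | exact absurd hef (hb _) | exact absurd hef.symm (ha _)
      | exact absurd hef.symm (hb _) | exact absurd hef hab | exact absurd hef.symm hab
      | simp_all
  · rintro ⟨e, he⟩
    dsimp only
    split_ifs with hpe hex
    · exact hφG _
    · rwa [hex]
    · obtain h | h | h := hq e he <;> first | contradiction | rwa [h]

end Transversal

namespace SimpleGraph

theorem exists_isCycle_top_of_injOn {L : ℕ} (hL : 3 ≤ L) {f : ℕ → V}
    (hf : Set.InjOn f (Set.Iio L)) (hfL : f L = f 0) :
    ∃ (w : V) (d : (⊤ : SimpleGraph V).Walk w w), d.IsCycle ∧ d.length = L ∧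
      ∀ e ∈ d.edges, ∃ k < L, e = s(f k, f (k + 1)) := by
  obtain ⟨m, rfl⟩ : ∃ m, L = m + 3 := ⟨L - 3, by omega⟩
  set S : Set (Sym2 V) := {e | ∃ k < m + 3, e = s(f k, f (k + 1))}
  have hf' : Injective fun a : Fin (m + 3) => f a := fun a b hab => Fin.ext (hf a.isLt b.isLt hab)
  have hsucc (a : Fin (m + 3)) : s(f a, f (a + 1 : Fin (m + 3))) ∈ S := by
    rw [Fin.val_add_one]
    split_ifs with h
    · exact ⟨m + 2, by omega, by simp [h, hfL]⟩
    · exact ⟨a, a.isLt, rfl⟩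
  have hcopy : cycleGraph (m + 3) ⊑ fromEdgeSet S := by
    refine ⟨⟨⟨fun a => f a, fun {a b} hab => ?_⟩, hf'⟩⟩
    refine (fromEdgeSet_adj S).mpr ⟨?_, hf'.ne hab.ne⟩
    rcases (cycleGraph_adj (n := m + 1)).mp hab with h | h
    · rw [sub_eq_iff_eq_add'] at h
      simpa [h, Sym2.eq_swap] using hsucc b
    · rw [sub_eq_iff_eq_add'] at h
      simpa [h] using hsucc a
  obtain ⟨w, p, hp, hplen⟩ := (cycleGraph_isContained_iff (by omega)).mp hcopy
  refine ⟨w, p.mapLe le_top, (Walk.isCycle_mapLe _).mpr hp, by simpa using hplen, ?_⟩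
  intro e he
  rw [Walk.edges_mapLe_eq_edges] at he
  exact (edgeSet_fromEdgeSet S ▸ p.edges_subset_edgeSet he).1

namespace Walk

variable {G : SimpleGraph V} {u : V}

theorem getVert_succ_mod_length (c : G.Walk u u) (m : ℕ) :
    c.getVert ((m + 1) % c.length) = c.getVert (m % c.length + 1) := by
  rcases Nat.eq_zero_or_pos c.length with h | h
  · simp [c.getVert_of_length_le, h]
  rw [← Nat.mod_add_mod]
  rcases Nat.lt_or_ge (m % c.length + 1) c.length with h' | h'
  · rw [Nat.mod_eq_of_lt h']
  · rw [le_antisymm (Nat.mod_lt m h) h', Nat.mod_self, getVert_length, getVert_zero]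

theorem IsCycle.exists_periodic_vert_of_mem_edges {c : G.Walk u u} (hc : c.IsCycle) {e : Sym2 V}
    (he : e ∈ c.edges) :
    ∃ vert : ℕ → V, Periodic vert c.length ∧ Set.InjOn vert (Set.Iio c.length) ∧
      (∀ i, s(vert i, vert (i + 1)) ∈ c.edges) ∧ e = s(vert 0, vert 1) := by
  induction e using Sym2.ind with | _ x y => ?_
  obtain ⟨j, hj, hxy⟩ := (mk_mem_edges_iff_exists c).mp he
  have hL : 0 < c.length := by omega
  refine ⟨fun k => c.getVert ((j + k) % c.length), fun k => ?_, ?_, fun i => ?_, ?_⟩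
  · simp only [← add_assoc, Nat.add_mod_right]
  · intro a ha b hb hab
    have hmod := hc.getVert_injOn' (Nat.le_sub_one_of_lt (Nat.mod_lt _ hL))
      (Nat.le_sub_one_of_lt (Nat.mod_lt _ hL)) hab
    have := Nat.ModEq.add_left_cancel' j hmod
    rwa [Nat.ModEq, Nat.mod_eq_of_lt ha, Nat.mod_eq_of_lt hb] at this
  · simp only [← add_assoc, getVert_succ_mod_length]
    exact (mk_mem_edges_iff_exists c).mpr ⟨_, Nat.mod_lt _ hL, rfl⟩
  · simp [getVert_succ_mod_length, Nat.mod_eq_of_lt hj, hxy]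

end Walk

end SimpleGraph

theorem Finset.card_le_card_filter_add_card_sub {α β : Type*} [DecidableEq β] {N K : Finset β}
    {O : Finset α} {f : α → β} (hf : Set.InjOn f O) (hOK : ∀ i ∈ O, f i ∈ K) (hNK : N ⊆ K) :
    #N ≤ #{i ∈ O | f i ∈ N} + (#K - #O) := by
  have hcover : N ⊆ {i ∈ O | f i ∈ N}.image f ∪ (K \ O.image f) := by
    intro y hy
    by_cases hyO : y ∈ O.image f
    · obtain ⟨i, hi, rfl⟩ := mem_image.mp hyO
      exact mem_union_left _ (mem_image_of_mem f (mem_filter.mpr ⟨hi, hy⟩))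
    · exact mem_union_right _ (mem_sdiff.mpr ⟨hNK hy, hyO⟩)
  calc #N ≤ #({i ∈ O | f i ∈ N}.image f ∪ (K \ O.image f)) := card_le_card hcover
    _ ≤ #({i ∈ O | f i ∈ N}.image f) + #(K \ O.image f) := card_union_le _ _
    _ ≤ #{i ∈ O | f i ∈ N} + (#K - #O) := by
      rw [card_sdiff_of_subset (image_subset_iff.mpr hOK), card_image_of_injOn hf]
      exact Nat.add_le_add_right card_image_le _

theorem card_filter_range_two_mul_even (m : ℕ) : #{i ∈ range (2 * m) | Even i} = m := by
  have : {i ∈ range (2 * m) | Even i} = (range m).image (2 * ·) := by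
    ext i
    simp only [mem_filter, mem_range, mem_image, Nat.even_iff]
    exact ⟨fun h => ⟨i / 2, by omega, by omega⟩, by rintro ⟨t, ht, rfl⟩; omega⟩
  rw [this, card_image_of_injective _ (fun a b h => by simpa using h), card_range]

theorem card_filter_range_two_mul_odd (m : ℕ) : #{i ∈ range (2 * m) | Odd i} = m := by
  have : {i ∈ range (2 * m) | Odd i} = (range m).image (2 * · + 1) := by
    ext i
    simp only [mem_filter, mem_range, mem_image, Nat.odd_iff]
    exact ⟨fun h => ⟨i / 2, by omega, by omega⟩, by rintro ⟨t, ht, rfl⟩; omega⟩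
  rw [this, card_image_of_injective _ (fun a b h => by simpa using h), card_range]

theorem Bool.eq_iff_even_of_forall_ne_succ {b : ℕ → Bool} (h : ∀ i, b (i + 1) ≠ b i) (i : ℕ) :
    b i = b 0 ↔ Even i := by
  induction i with
  | zero => simp
  | succ i ih =>
    rw [Nat.even_add_one, ← ih]
    have hi := h i
    revert hi
    cases b (i + 1) <;> cases b i <;> cases b 0 <;> decide

section Bipartite

variable {α : Type*}

theorem card_filter_isLeft_ne [Fintype α] (b : Bool) :
    #{y : α ⊕ α | y.isLeft ≠ b} = Fintype.card α := by
  rw [Finset.card_filter, Fintype.sum_sum_type]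
  cases b <;> simp

theorem isLeft_ne_of_adj {H : SimpleGraph (α ⊕ α)} (hL : ∀ a b, ¬H.Adj (.inl a) (.inl b))
    (hR : ∀ a b, ¬H.Adj (.inr a) (.inr b)) {x y : α ⊕ α} (hxy : H.Adj x y) :
    x.isLeft ≠ y.isLeft := by
  rcases x with a | a <;> rcases y with b | b
  exacts [absurd hxy (hL a b), by simp, by simp, absurd hxy (hR a b)]

theorem ncard_neighborSet_le_card_filter_add_one [Fintype α] {ι : Type*}
    {H : SimpleGraph (α ⊕ α)} [DecidableRel H.Adj] (hH : ∀ x y, H.Adj x y → x.isLeft ≠ y.isLeft)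
    {x : α ⊕ α} {O : Finset ι} (hO : #O + 1 = Fintype.card α) {f : ι → α ⊕ α} (hf : Set.InjOn f O)
    (hfO : ∀ i ∈ O, (f i).isLeft ≠ x.isLeft) :
    (H.neighborSet x).ncard ≤ #{i ∈ O | H.Adj x (f i)} + 1 := by
  classical
  have := card_le_card_filter_add_card_sub (N := (H.neighborSet x).toFinset)
    (K := {y | y.isLeft ≠ x.isLeft}) hf (by simpa using hfO)
    (fun y hy => by simpa using (hH x y (by simpa using hy)).symm)
  rw [card_filter_isLeft_ne] at this
  simpa [Set.ncard_eq_toFinset_card', ← hO] using this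

theorem add_one_le_ncard_add_ncard {ι : Type*} {G : ι → SimpleGraph (α ⊕ α)} {n : ℕ}
    (hred : ∀ i a, n < 2 * ((G i).neighborSet (.inl a)).ncard)
    (hblue : ∀ i b, n ≤ 2 * ((G i).neighborSet (.inr b)).ncard) (i j : ι) {x y : α ⊕ α}
    (hxy : x.isLeft ≠ y.isLeft) :
    n + 1 ≤ ((G i).neighborSet x).ncard + ((G j).neighborSet y).ncard := by
  rcases x with a | a <;> rcases y with b | b
  · simp at hxy
  · have := hred i a; have := hblue j b; omega
  · have := hblue i a; have := hred j b; omega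
  · simp at hxy

end Bipartite

/-- For the cycle `v₀ v₁ … v_{P-1}`, the chords `v₀v_s` and `v₁v_u` with `u = chordShift P ℓ s`
close, together with two arcs of the cycle, a cycle of length `ℓ`. -/
def chordShift (P ℓ s : ℕ) : ℕ := if s + 1 < ℓ then s + P + 1 - ℓ else s + 3 - ℓ

theorem exists_mem_chordShift_mem {m ℓ : ℕ} (hℓ : Even ℓ) (hℓ4 : 4 ≤ ℓ) (hℓm : ℓ + 2 ≤ 2 * m)
    {Q R : Finset ℕ} (hQ : ∀ s ∈ Q, Odd s ∧ 3 ≤ s ∧ s < 2 * m)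
    (hR : ∀ u ∈ R, Even u ∧ 0 < u ∧ u < 2 * m) (hcard : m ≤ #Q + #R) :
    ∃ s ∈ Q, chordShift (2 * m) ℓ s ∈ R := by
  rw [Nat.even_iff] at hℓ
  set E := {i ∈ range (2 * m) | Even i}.erase 0
  have hE : #E = m - 1 := by
    rw [card_erase_of_mem (by simp; omega), card_filter_range_two_mul_even]
  have hshift : Set.InjOn (chordShift (2 * m) ℓ) Q := by
    intro a ha b hb hab
    have := hQ a ha; have := hQ b hb
    simp only [chordShift, Nat.odd_iff] at *
    split_ifs at hab <;> omega
  have hQE : Q.image (chordShift (2 * m) ℓ) ⊆ E := by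
    intro u hu
    obtain ⟨s, hs, rfl⟩ := mem_image.mp hu
    have := hQ s hs
    simp only [E, mem_erase, mem_filter, mem_range, chordShift, Nat.even_iff, Nat.odd_iff] at this ⊢
    split_ifs <;> omega
  have hRE : R ⊆ E := by
    intro u hu
    have := hR u hu
    simp only [E, mem_erase, mem_filter, mem_range]
    exact ⟨this.2.1.ne', this.2.2, this.1⟩
  obtain ⟨u, hu⟩ := inter_nonempty_of_card_lt_card_add_card hQE hRE
    (by rw [card_image_of_injOn hshift]; omega)
  obtain ⟨s, hs, rfl⟩ := mem_image.mp (mem_inter.mp hu).1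
  exact ⟨s, hs, (mem_inter.mp hu).2⟩

theorem exists_chord_cycle_indices {P ℓ s : ℕ} (hℓ : Even ℓ) (hℓP : ℓ + 2 ≤ P)
    (hs : Odd s) (hsP : s < P) :
    ∃ σ : ℕ → ℕ, Set.InjOn σ (Set.Iio ℓ) ∧ Set.MapsTo σ (Set.Iio ℓ) (Set.Iio P) ∧
      (σ ℓ = σ 0 ∨ σ ℓ = σ 0 + P) ∧
      ∀ k < ℓ, σ (k + 1) = σ k + 1 ∨ σ k = σ (k + 1) + 1 ∨
        s(σ k, σ (k + 1)) = s(0, s) ∨ s(σ k, σ (k + 1)) = s(1, chordShift P ℓ s) := by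
  rw [Nat.even_iff] at hℓ
  rw [Nat.odd_iff] at hs
  simp only [chordShift, Sym2.eq_iff]
  by_cases hsℓ : s + 1 < ℓ
  · -- the cycle `v₀ v_s v_{s-1} … v₁ v_u v_{u+1} … v_P = v₀`, where `u = chordShift P ℓ s`
    refine ⟨fun k => if k = 0 then 0 else if k ≤ s then s + 1 - k else s + P + 1 - ℓ + k - s - 1,
      fun a ha b hb hab => ?_, fun a ha => ?_, ?_, fun k hk => ?_⟩ <;>
    simp only [Set.mem_Iio, if_pos hsℓ] at * <;> split_ifs at * <;> first | contradiction | omega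
  · -- the cycle `v₀ v₁ v_u v_{u+1} … v_s v₀`
    refine ⟨fun k => if k ≤ 1 then k else if k < ℓ then s + 3 - ℓ + k - 2 else 0,
      fun a ha b hb hab => ?_, fun a ha => ?_, ?_, fun k hk => ?_⟩ <;>
    simp only [Set.mem_Iio, if_neg hsℓ] at * <;> split_ifs at * <;> first | contradiction | omega

theorem exists_isCycle_of_chords {vert : ℕ → V} {P : ℕ} (hper : Periodic vert P)
    (hinj : Set.InjOn vert (Set.Iio P)) {ℓ s : ℕ} (hℓ : Even ℓ) (hℓ4 : 4 ≤ ℓ) (hℓP : ℓ + 2 ≤ P)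
    (hs : Odd s) (hsP : s < P) :
    ∃ (w : V) (d : (⊤ : SimpleGraph V).Walk w w), d.IsCycle ∧ d.length = ℓ ∧
      ∀ e ∈ d.edges, (∃ i, e = s(vert i, vert (i + 1))) ∨ e = s(vert 0, vert s) ∨
        e = s(vert 1, vert (chordShift P ℓ s)) := by
  obtain ⟨σ, hσ, hσP, hσℓ, hstep⟩ := exists_chord_cycle_indices hℓ hℓP hs hsP
  have hclose : vert (σ ℓ) = vert (σ 0) := by
    rcases hσℓ with h | h <;> simp [h, hper (σ 0)]
  obtain ⟨w, d, hd, hlen, hedges⟩ :=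
    exists_isCycle_top_of_injOn (f := vert ∘ σ) (by omega) (hinj.comp hσ hσP) hclose
  refine ⟨w, d, hd, hlen, fun e he => ?_⟩
  obtain ⟨k, hk, rfl⟩ := hedges e he
  rcases hstep k hk with h | h | h | h
  · exact Or.inl ⟨σ k, by simp [h]⟩
  · exact Or.inl ⟨σ (k + 1), by simp [h, Sym2.eq_swap]⟩
  · exact Or.inr (Or.inl (by simpa using congrArg (Sym2.map vert) h))
  · exact Or.inr (Or.inr (by simpa using congrArg (Sym2.map vert) h))

theorem exists_matching_chords {α : Type*} [Fintype α] {m ℓ : ℕ} (hα : Fintype.card α = m + 1)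
    (hℓ : Even ℓ) (hℓ4 : 4 ≤ ℓ) (hℓm : ℓ + 2 ≤ 2 * m) {H₁ H₂ : SimpleGraph (α ⊕ α)}
    (hH₁ : ∀ x y, H₁.Adj x y → x.isLeft ≠ y.isLeft) (hH₂ : ∀ x y, H₂.Adj x y → x.isLeft ≠ y.isLeft)
    {vert : ℕ → α ⊕ α} (hinj : Set.InjOn vert (Set.Iio (2 * m)))
    (hpar : ∀ i, (vert i).isLeft = (vert 0).isLeft ↔ Even i)
    (h₁ : ¬H₁.Adj (vert 0) (vert 1)) (h₂ : ¬H₂.Adj (vert 1) (vert 0))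
    (hdeg : Fintype.card α + 1 ≤
      (H₁.neighborSet (vert 0)).ncard + (H₂.neighborSet (vert 1)).ncard) :
    ∃ s, Odd s ∧ s < 2 * m ∧ H₁.Adj (vert 0) (vert s) ∧
      H₂.Adj (vert 1) (vert (chordShift (2 * m) ℓ s)) := by
  classical
  have hinj' (p : ℕ → Prop) [DecidablePred p] :
      Set.InjOn vert ({i ∈ range (2 * m) | p i} : Finset ℕ) :=
    hinj.mono fun i hi => by simp_all
  have hodd : #{i ∈ range (2 * m) | Odd i} + 1 = Fintype.card α := by
    rw [card_filter_range_two_mul_odd, hα]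
  have heven : #{i ∈ range (2 * m) | Even i} + 1 = Fintype.card α := by
    rw [card_filter_range_two_mul_even, hα]
  have hvert1 : (vert 1).isLeft ≠ (vert 0).isLeft := by simp [hpar 1]
  set Q := {i ∈ {i ∈ range (2 * m) | Odd i} | H₁.Adj (vert 0) (vert i)}
  set R := {i ∈ {i ∈ range (2 * m) | Even i} | H₂.Adj (vert 1) (vert i)}
  have hdegQ : (H₁.neighborSet (vert 0)).ncard ≤ #Q + 1 :=
    ncard_neighborSet_le_card_filter_add_one hH₁ hodd (hinj' _)
      fun i hi h => Nat.not_even_iff_odd.mpr (mem_filter.mp hi).2 ((hpar i).mp h)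
  have hdegR : (H₂.neighborSet (vert 1)).ncard ≤ #R + 1 :=
    ncard_neighborSet_le_card_filter_add_one hH₂ heven (hinj' _)
      fun i hi => by rw [(hpar i).mpr (mem_filter.mp hi).2]; exact hvert1.symm
  have hQ : ∀ s ∈ Q, Odd s ∧ 3 ≤ s ∧ s < 2 * m := by
    intro s hs
    simp only [Q, mem_filter, mem_range] at hs
    obtain ⟨⟨hsm, hs⟩, hadj⟩ := hs
    have : s ≠ 1 := by rintro rfl; exact h₁ hadj
    exact ⟨hs, by rcases hs with ⟨k, rfl⟩; omega, hsm⟩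
  have hR : ∀ u ∈ R, Even u ∧ 0 < u ∧ u < 2 * m := by
    intro u hu
    simp only [R, mem_filter, mem_range] at hu
    obtain ⟨⟨hum, hu⟩, hadj⟩ := hu
    have : u ≠ 0 := by rintro rfl; exact h₂ hadj
    exact ⟨hu, by omega, hum⟩
  obtain ⟨s, hsQ, hsR⟩ := exists_mem_chordShift_mem hℓ hℓ4 hℓm hQ hR (by omega)
  obtain ⟨hs, -, hsm⟩ := hQ s hsQ
  exact ⟨s, hs, hsm, (mem_filter.mp hsQ).2, (mem_filter.mp hsR).2⟩

/-- Claim 3.5: let `C` be a partial transversal isomorphic to a cycle of length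
`2n - 2` whose injection misses exactly the indices `2n - 1` and `2n` (here the
last two elements of `Fin (2n)`), and suppose the family has no partial
transversal isomorphic to a cycle of a fixed even length `ℓ`, `4 ≤ ℓ ≤ 2n - 4`.
Then every edge of `C` belongs to `G_{2n-1}` or to `G_{2n}`. -/
theorem stmt_13 (n : ℕ) (G : Fin (2 * n) → SimpleGraph (Fin n ⊕ Fin n))
    (hbipL : ∀ i, ∀ a b : Fin n, ¬ (G i).Adj (Sum.inl a) (Sum.inl b))
    (hbipR : ∀ i, ∀ a b : Fin n, ¬ (G i).Adj (Sum.inr a) (Sum.inr b))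
    (hred : ∀ i, ∀ a : Fin n, n < 2 * ((G i).neighborSet (Sum.inl a)).ncard)
    (hblue : ∀ i, ∀ b : Fin n, n ≤ 2 * ((G i).neighborSet (Sum.inr b)).ncard)
    (ℓ : ℕ) (hle : Even ℓ) (hl4 : 4 ≤ ℓ) (hlu : ℓ ≤ 2 * n - 4)
    (v : Fin n ⊕ Fin n) (c : (⊤ : SimpleGraph (Fin n ⊕ Fin n)).Walk v v)
    (hc : c.IsCycle) (hlen : c.length = 2 * n - 2)
    (φ : {e : Sym2 (Fin n ⊕ Fin n) // e ∈ c.edges} → Fin (2 * n))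
    (hinj : Function.Injective φ) (hmem : ∀ e, e.val ∈ (G (φ e)).edgeSet)
    (hmiss : ∀ e, (φ e : ℕ) < 2 * n - 2)
    (hnoℓ : ¬ ∃ (w : Fin n ⊕ Fin n) (d : (⊤ : SimpleGraph (Fin n ⊕ Fin n)).Walk w w),
        d.IsCycle ∧ d.length = ℓ ∧
        ∃ ψ : {e : Sym2 (Fin n ⊕ Fin n) // e ∈ d.edges} → Fin (2 * n),
          Function.Injective ψ ∧ ∀ e, e.val ∈ (G (ψ e)).edgeSet) :
    ∀ e ∈ c.edges,
      e ∈ (G ⟨2 * n - 2, by omega⟩).edgeSet ∨ e ∈ (G ⟨2 * n - 1, by omega⟩).edgeSet := by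
  intro e he
  by_contra! hAB
  obtain ⟨vert, hper, hvert, hedge, rfl⟩ := hc.exists_periodic_vert_of_mem_edges he
  rw [hlen, show 2 * n - 2 = 2 * (n - 1) by omega] at hper hvert
  have hbip i : ∀ x y, (G i).Adj x y → x.isLeft ≠ y.isLeft :=
    fun _ _ => isLeft_ne_of_adj (hbipL i) (hbipR i)
  have hflip i : (vert i).isLeft ≠ (vert (i + 1)).isLeft := hbip _ _ _ (hmem ⟨_, hedge i⟩)
  have hpar := Bool.eq_iff_even_of_forall_ne_succ (b := fun i => (vert i).isLeft)
    fun i => (hflip i).symm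
  have hdeg := add_one_le_ncard_add_ncard hred hblue ⟨2 * n - 2, by omega⟩ ⟨2 * n - 1, by omega⟩
    (x := vert 0) (y := vert 1) (hflip 0)
  obtain ⟨s, hs, hsP, hA, hB⟩ := exists_matching_chords (m := n - 1)
    (by rw [Fintype.card_fin]; omega) hle hl4 (by omega) (hbip _) (hbip _) hvert hpar hAB.1
    (fun h => hAB.2 h.symm) (by rwa [Fintype.card_fin])
  obtain ⟨w, d, hd, hdlen, hdedges⟩ :=
    exists_isCycle_of_chords hper hvert hle hl4 (by omega) hs hsP
  refine hnoℓ ⟨w, d, hd, hdlen, isPartialTransversal_extend_two hinj hmem ?_ ?_ ?_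
    ((mem_edgeSet _).mpr hA) ((mem_edgeSet _).mpr hB) ?_⟩
  · simp only [ne_eq, Fin.mk.injEq]; omega
  · exact fun e h => (hmiss e).ne (congrArg Fin.val h)
  · exact fun e h => by have := hmiss e; rw [h, Fin.val_mk] at this; omega
  · intro e he
    rcases hdedges e he with ⟨i, rfl⟩ | h | h
    exacts [Or.inl (hedge i), Or.inr (Or.inl h), Or.inr (Or.inr h)]
end
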